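/- arXiv:2311.01351 — 4 statements merged into one kernel-verified Lean document; each statement's English description precedes it below -/
import Mathlib

section
/- Soundness of SC for simplicial models: if a formula φ of the language L_D is provable in the proof system SC, then for every (generalized) simplicial model C and every world w of C, we have C,w ⊨ φ. In particular, the axioms K, B, 4, Mono, Union, NE and P are valid in every simplicial model. -/
attribute [local instance] Classical.propDecidable

noncomputable section

/-- Formulas of the epistemic language `L_D` with distributed knowledge `D_B`
for nonempty groups `B` of agents. -/
inductive Form (A AP : Type) : Type
  | atom : AP → Form A AP
  | neg  : Form A AP → Form A AP
  | and  : Form A AP → Form A AP → Form A AP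
  | dk   : (B : Finset A) → B.Nonempty → Form A AP → Form A AP

namespace Form

variable {A AP : Type}

/-- Disjunction, `φ ∨ ψ := ¬(¬φ ∧ ¬ψ)`. -/
def or (φ ψ : Form A AP) : Form A AP := neg ((neg φ).and (neg ψ))

/-- Implication, `φ ⇒ ψ := ¬φ ∨ ψ`. -/
def imp (φ ψ : Form A AP) : Form A AP := (neg φ).or ψ

/-- `⊤ := p ∨ ¬p`. -/
def verum [Nonempty AP] : Form A AP :=
  (atom (Classical.arbitrary AP)).or (neg (atom (Classical.arbitrary AP)))

/-- `⊥ := ¬⊤`. -/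
def falsum [Nonempty AP] : Form A AP := neg verum

/-- Individual knowledge `K_a φ := D_{{a}} φ`. -/
def K (a : A) (φ : Form A AP) : Form A AP := dk {a} (Finset.singleton_nonempty a) φ

/-- `dead_a := K_a ⊥`. -/
def deadAgent [Nonempty AP] (a : A) : Form A AP := K a falsum

/-- `alive_a := ¬dead_a`. -/
def aliveAgent [Nonempty AP] (a : A) : Form A AP := (deadAgent a).neg

/-- `alive_B := ¬ D_B ⊥`. -/
def aliveGrp [Nonempty AP] (B : Finset A) (hB : B.Nonempty) : Form A AP := (dk B hB falsum).neg

/-- Finite conjunction. -/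
def bigAnd [Nonempty AP] : List (Form A AP) → Form A AP
  | [] => verum
  | φ :: t => φ.and (bigAnd t)

/-- Finite disjunction. -/
def bigOr [Nonempty AP] : List (Form A AP) → Form A AP
  | [] => falsum
  | φ :: t => φ.or (bigOr t)

/-- `dead_C := ⋀_{a ∈ C} dead_a`. -/
def deadGrp [Nonempty AP] (C : Finset A) : Form A AP := bigAnd (C.toList.map deadAgent)

end Form

/-- A propositional tautology: true under every assignment that interprets `¬` and `∧`
classically (atoms and `D_B`-formulas are treated as opaque). -/
def IsTaut {A AP : Type} (φ : Form A AP) : Prop :=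
  ∀ v : Form A AP → Prop,
    (∀ ψ : Form A AP, v ψ.neg ↔ ¬ v ψ) →
    (∀ ψ χ : Form A AP, v (ψ.and χ) ↔ (v ψ ∧ v χ)) →
    v φ

theorem unionNE {α : Type} [DecidableEq α] {s t : Finset α} (h : s.Nonempty) :
    (s ∪ t).Nonempty :=
  ⟨h.choose, Finset.mem_union_left _ h.choose_spec⟩

section ProofSystem

variable {A AP : Type} [Fintype A] [Nonempty AP]

/-- The proof system `SC` (axioms `K`, `B`, `4`, `Mono`, `Union`, `NE`, `P`, all
propositional tautologies, modus ponens and necessitation), extended by an arbitrary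
additional set `Ax` of axioms. -/
inductive Prf (Ax : Form A AP → Prop) : Form A AP → Prop
  | taut {φ : Form A AP} : IsTaut φ → Prf Ax φ
  | mp {φ ψ : Form A AP} : Prf Ax (φ.imp ψ) → Prf Ax φ → Prf Ax ψ
  | nec {φ : Form A AP} (B : Finset A) (hB : B.Nonempty) :
      Prf Ax φ → Prf Ax (Form.dk B hB φ)
  | axK {φ ψ : Form A AP} (B : Finset A) (hB : B.Nonempty) :
      Prf Ax ((Form.dk B hB (φ.imp ψ)).imp ((Form.dk B hB φ).imp (Form.dk B hB ψ)))
  | axB {φ : Form A AP} (B : Finset A) (hB : B.Nonempty) :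
      Prf Ax (φ.imp (Form.dk B hB (Form.neg (Form.dk B hB φ.neg))))
  | ax4 {φ : Form A AP} (B : Finset A) (hB : B.Nonempty) :
      Prf Ax ((Form.dk B hB φ).imp (Form.dk B hB (Form.dk B hB φ)))
  | axMono {φ : Form A AP} (B B' : Finset A) (hB : B.Nonempty) (hB' : B'.Nonempty)
      (hsub : B ⊆ B') : Prf Ax ((Form.dk B hB φ).imp (Form.dk B' hB' φ))
  | axUnion (B B' : Finset A) (hB : B.Nonempty) (hB' : B'.Nonempty) :
      Prf Ax (((Form.aliveGrp B hB).and (Form.aliveGrp B' hB')).imp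
        (Form.aliveGrp (B ∪ B') (unionNE hB)))
  | axNE : Prf Ax (Form.bigOr ((Finset.univ : Finset A).toList.map Form.aliveAgent))
  | axP {φ : Form A AP} (B : Finset A) (hB : B.Nonempty) :
      Prf Ax ((((Form.aliveGrp B hB).and (Form.deadGrp Bᶜ)).and φ).imp
        (Form.dk B hB ((Form.deadGrp Bᶜ).imp φ)))
  | extra {φ : Form A AP} : Ax φ → Prf Ax φ

/-- Provability in `SC` itself (no extra axioms). -/
def SC : Form A AP → Prop := Prf (fun _ => False)

/-- Instances of Axiom `Min : alive_B ∧ dead_{A∖B} ⇒ D_B dead_{A∖B}` for `B ⊊ A`. -/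
def MinAx : Form A AP → Prop := fun φ =>
  ∃ (B : Finset A) (hB : B.Nonempty), B ≠ Finset.univ ∧
    φ = ((Form.aliveGrp B hB).and (Form.deadGrp Bᶜ)).imp (Form.dk B hB (Form.deadGrp Bᶜ))

/-- Instances of Axiom `Max : alive_B ⇒ ¬ D_B ¬ dead_{A∖B}` for `B ⊊ A`. -/
def MaxAx : Form A AP → Prop := fun φ =>
  ∃ (B : Finset A) (hB : B.Nonempty), B ≠ Finset.univ ∧
    φ = (Form.aliveGrp B hB).imp (Form.neg (Form.dk B hB (Form.neg (Form.deadGrp Bᶜ))))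

/-- Provability in `SCmin = SC + Min`. -/
def SCmin : Form A AP → Prop := Prf MinAx

/-- Provability in `SCmax = SC + Max`. -/
def SCmax : Form A AP → Prop := Prf MaxAx

/-- `Γ ⊢_P φ` : some finite conjunction of members of `Γ` provably implies `φ`. -/
def ProvesFrom (P : Form A AP → Prop) (Γ : Set (Form A AP)) (φ : Form A AP) : Prop :=
  ∃ L : List (Form A AP), (∀ γ ∈ L, γ ∈ Γ) ∧ P ((Form.bigAnd L).imp φ)

/-- Consistency of a set of formulas with respect to a provability predicate `P`. -/
def ConsistentSet (P : Form A AP → Prop) (Γ : Set (Form A AP)) : Prop :=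
  ¬ ProvesFrom P Γ Form.falsum

/-- Maximal consistent sets of formulas. -/
def MaxConsistent (P : Form A AP → Prop) (Γ : Set (Form A AP)) : Prop :=
  ConsistentSet P Γ ∧ ∀ φ ∉ Γ, ¬ ConsistentSet P (insert φ Γ)

end ProofSystem

/-! ### Simplicial models -/

/-- The data of a (generalized) simplicial model: a set `S` of simplexes over the vertex
type `V`, a colouring `chi`, a set of worlds `Wld` and a labelling of worlds. -/
structure SimpData (A AP V : Type) where
  S : Set (Finset V)
  chi : V → A
  Wld : Set (Finset V)
  label : Finset V → Set AP

namespace SimpData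

variable {A AP V : Type}

/-- A facet: a simplex maximal under inclusion. -/
def IsFacet (C : SimpData A AP V) (X : Finset V) : Prop :=
  X ∈ C.S ∧ ∀ Y ∈ C.S, X ⊆ Y → X = Y

/-- `⟨V,S,chi⟩` is a chromatic simplicial complex: simplexes are nonempty, every
singleton is a simplex, `S` is downward closed, and every simplex has pairwise
distinct colours. -/
def IsComplex (C : SimpData A AP V) : Prop :=
  (∀ X ∈ C.S, X.Nonempty) ∧
  (∀ v : V, ({v} : Finset V) ∈ C.S) ∧
  (∀ X ∈ C.S, ∀ Y : Finset V, Y ⊆ X → Y.Nonempty → Y ∈ C.S) ∧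
  (∀ X ∈ C.S, ∀ v ∈ X, ∀ w ∈ X, C.chi v = C.chi w → v = w)

/-- `C` is a generalized simplicial model: a chromatic simplicial complex together
with a set of worlds `Wld` with `Facets(C) ⊆ Wld ⊆ S`. -/
def IsModel (C : SimpData A AP V) : Prop :=
  C.IsComplex ∧ (∀ X, C.IsFacet X → X ∈ C.Wld) ∧ C.Wld ⊆ C.S

/-- The model is minimal: the worlds are exactly the facets. -/
def Minimal (C : SimpData A AP V) : Prop := ∀ X, X ∈ C.Wld ↔ C.IsFacet X

/-- The model is maximal: every simplex is a world. -/
def Maximal (C : SimpData A AP V) : Prop := C.Wld = C.S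

end SimpData

/-- Satisfaction on simplicial models: `C,w ⊨ D_B φ` iff `φ` holds at every world `w'`
with `B ⊆ chi(w ∩ w')`. -/
def SimpData.sat {A AP V : Type} (C : SimpData A AP V) : Finset V → Form A AP → Prop
  | w, .atom p => p ∈ C.label w
  | w, .neg φ => ¬ C.sat w φ
  | w, .and φ ψ => C.sat w φ ∧ C.sat w ψ
  | w, .dk B _ φ => ∀ w' ∈ C.Wld, (↑B : Set A) ⊆ C.chi '' ((↑w : Set V) ∩ ↑w') → C.sat w' φ

/-! ### Partial epistemic models -/

/-- The data of a partial epistemic model: an accessibility relation for each agent and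
a labelling of worlds. -/
structure PEData (A AP W : Type) where
  rel : A → W → W → Prop
  label : W → Set AP

namespace PEData

variable {A AP W : Type}

/-- Each relation is a partial equivalence relation (symmetric and transitive). -/
def IsPE (M : PEData A AP W) : Prop := ∀ a : A, Symmetric (M.rel a) ∧ Transitive (M.rel a)

/-- The set of agents alive in a world. -/
def live (M : PEData A AP W) (w : W) : Set A := {a | M.rel a w w}

/-- Every world has at least one alive agent. -/
def NoEmptyWorld (M : PEData A AP W) : Prop := ∀ w : W, (M.live w).Nonempty

/-- Distinct worlds with the same alive agents are distinguished by some alive agent. -/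
def Proper (M : PEData A AP W) : Prop :=
  ∀ w w' : W, w ≠ w' → M.live w = M.live w' → ∃ a ∈ M.live w, ¬ M.rel a w w'

/-- The model has no sub-world. -/
def Minimal (M : PEData A AP W) : Prop :=
  ∀ w w' : W, M.live w ⊂ M.live w' → ∃ a ∈ M.live w, ¬ M.rel a w w'

/-- The model has all sub-worlds. -/
def Maximal (M : PEData A AP W) : Prop :=
  ∀ w' : W, ∀ B : Set A, B.Nonempty → B ⊂ M.live w' →
    ∃ w : W, M.live w = B ∧ ∀ a ∈ B, M.rel a w w'

end PEData

/-- Satisfaction on partial epistemic models: `M,w ⊨ D_B φ` iff `φ` holds at every `w'`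
with `w ∼_a w'` for all `a ∈ B`. -/
def PEData.sat {A AP W : Type} (M : PEData A AP W) : W → Form A AP → Prop
  | w, .atom p => p ∈ M.label w
  | w, .neg φ => ¬ M.sat w φ
  | w, .and φ ψ => M.sat w φ ∧ M.sat w ψ
  | w, .dk B _ φ => ∀ w' : W, (∀ a ∈ B, M.rel a w w') → M.sat w' φ

/-- The partial epistemic model `κ(C)` associated with a simplicial model `C`:
same worlds, `w ∼_a w'` iff `a ∈ chi(w ∩ w')`, same labelling. -/
def kappa {A AP V : Type} (C : SimpData A AP V) : PEData A AP {w : Finset V // w ∈ C.Wld} where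
  rel := fun a w w' => a ∈ C.chi '' ((↑w.1 : Set V) ∩ ↑w'.1)
  label := fun w => C.label w.1

/-- Vertices of `σ(M)`: pairs `v^w_a = (a, [w]_a)` with `a` alive in `w`. -/
def sigmaVert {A AP W : Type} (M : PEData A AP W) : Type :=
  {v : A × Set W // ∃ w : W, M.rel v.1 w w ∧ v.2 = {w' | M.rel v.1 w w'}}

/-- The world `X_w = { v^w_a | a ∈ live(w) }` of `σ(M)`. -/
def sigmaWorld {A AP W : Type} [Fintype A] (M : PEData A AP W) (w : W) :
    Finset (sigmaVert M) :=
  ((Finset.univ : Finset A).filter (fun a => M.rel a w w)).attach.image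
    (fun a => ⟨(a.1, {w' | M.rel a.1 w w'}),
      ⟨w, by exact (Finset.mem_filter.mp a.2).2, rfl⟩⟩)

/-- The simplicial model `σ(M)` associated with a partial epistemic model `M`:
simplexes are the nonempty subsets of the sets `X_w`, worlds are the `X_w`,
colouring is the first projection, and `ℓ(X_w) = L(w)`. -/
def sigmaModel {A AP W : Type} [Fintype A] (M : PEData A AP W) :
    SimpData A AP (sigmaVert M) where
  S := {X | X.Nonempty ∧ ∃ w : W, X ⊆ sigmaWorld M w}
  chi := fun v => v.1.1
  Wld := {X | ∃ w : W, X = sigmaWorld M w}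
  label := fun X => {p | ∃ w : W, X = sigmaWorld M w ∧ p ∈ M.label w}

/-! ### Pseudo-models, the canonical model and unravelling -/

/-- The data of a pseudo-model: a relation `∼_B` for every group `B ⊆ A`. -/
structure PseudoData (A AP W : Type) where
  rel : Finset A → W → W → Prop
  label : W → Set AP

/-- `M` is a pseudo-model: each `∼_B` is symmetric and transitive, the relations are
antitone (`∼_{B'} ⊆ ∼_B` for `B ⊆ B'`), and `w ∼_B w` together with `w ∼_{B'} w`
implies `w ∼_{B ∪ B'} w`. -/
def PseudoData.IsPseudo {A AP W : Type} [DecidableEq A] (M : PseudoData A AP W) : Prop :=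
  (∀ B : Finset A, Symmetric (M.rel B)) ∧
  (∀ B : Finset A, Transitive (M.rel B)) ∧
  (∀ B B' : Finset A, B ⊆ B' → ∀ w w' : W, M.rel B' w w' → M.rel B w w') ∧
  (∀ (w : W) (B B' : Finset A), M.rel B w w → M.rel B' w w → M.rel (B ∪ B') w w)

/-- Satisfaction on pseudo-models: `D_B φ` quantifies over `∼_B`-successors. -/
def PseudoData.sat {A AP W : Type} (M : PseudoData A AP W) : W → Form A AP → Prop
  | w, .atom p => p ∈ M.label w
  | w, .neg φ => ¬ M.sat w φ
  | w, .and φ ψ => M.sat w φ ∧ M.sat w ψ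
  | w, .dk B _ φ => ∀ w' : W, M.rel B w w' → M.sat w' φ

/-- The canonical pseudo-model of a proof system `P`: worlds are the maximal
`P`-consistent sets, `Γ ∼_B Δ` iff every `φ` with `D_B φ ∈ Γ` satisfies `φ ∈ Δ`,
and `L(Γ) = Γ ∩ AP`. -/
def canonicalPsm (A AP : Type) [Fintype A] [Nonempty AP] (P : Form A AP → Prop) :
    PseudoData A AP {Γ : Set (Form A AP) // MaxConsistent P Γ} where
  rel := fun B Γ Δ => ∀ (hB : B.Nonempty) (φ : Form A AP), Form.dk B hB φ ∈ Γ.1 → φ ∈ Δ.1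
  label := fun Γ => {p | Form.atom p ∈ Γ.1}

/-- `IsHist M w l` : the sequence starting at `w` with steps `l` is a history of `M`. -/
def IsHist {A AP W : Type} (M : PseudoData A AP W) : W → List (Finset A × W) → Prop
  | _, [] => True
  | w, (B, w') :: t => M.rel B w w' ∧ IsHist M w' t

/-- A history `(w₀, B₁, w₁, …, B_k, w_k)` of a pseudo-model `M`. -/
structure Hist {A AP W : Type} (M : PseudoData A AP W) where
  first : W
  steps : List (Finset A × W)
  valid : IsHist M first steps

/-- The last world of a history. -/
def Hist.last {A AP W : Type} {M : PseudoData A AP W} (h : Hist M) : W :=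
  (h.steps.map Prod.snd).getLastD h.first

/-- `h →_a h'` : `h'` extends `h` by one step `(B, w)` with `a ∈ B`. -/
def histStep {A AP W : Type} (M : PseudoData A AP W) (a : A) (h h' : Hist M) : Prop :=
  ∃ (B : Finset A) (w : W), a ∈ B ∧ h'.first = h.first ∧ h'.steps = h.steps ++ [(B, w)]

/-- `∼^U_a` : the symmetric-transitive closure of `→_a`. -/
def histRel {A AP W : Type} (M : PseudoData A AP W) (a : A) : Hist M → Hist M → Prop :=
  Relation.TransGen (fun h h' => histStep M a h h' ∨ histStep M a h' h)

/-- The unravelling `U(M)` of a pseudo-model `M`: worlds are histories, relations are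
the `∼^U_a`, and `L^U(h) = L(last h)`. -/
def unravel {A AP W : Type} (M : PseudoData A AP W) : PEData A AP (Hist M) where
  rel := histRel M
  label := fun h => M.label h.last

/-- World-equivalence `w ≡ w'` : same alive agents and related by every alive agent. -/
def pequiv {A AP W : Type} (M : PEData A AP W) (w w' : W) : Prop :=
  M.live w = M.live w' ∧ ∀ a ∈ M.live w, M.rel a w w'

/-- The quotient of a partial epistemic model by world-equivalence. -/
def properify {A AP W : Type} (M : PEData A AP W) : PEData A AP (Quot (pequiv M)) where
  rel := fun a x y => ∃ w w' : W, x = Quot.mk _ w ∧ y = Quot.mk _ w' ∧ M.rel a w w'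
  label := fun x => {p | ∃ w : W, x = Quot.mk _ w ∧ p ∈ M.label w}

/-! ### Local simplicial models, morphisms and the guarded positive fragment -/

/-- The data of a local simplicial model: atomic propositions label the vertices. -/
structure LocalSimpData (A AP V : Type) where
  S : Set (Finset V)
  chi : V → A
  Wld : Set (Finset V)
  vlabel : V → Set AP

namespace LocalSimpData

variable {A AP V : Type}

/-- A facet: a simplex maximal under inclusion. -/
def IsFacet (C : LocalSimpData A AP V) (X : Finset V) : Prop :=
  X ∈ C.S ∧ ∀ Y ∈ C.S, X ⊆ Y → X = Y

/-- `C` is a local simplicial model with respect to the ownership map `owner : AP → A`: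
a chromatic simplicial complex with `Facets ⊆ Wld ⊆ S`, where each vertex is labelled
with atomic propositions belonging to its colour. -/
def IsModel (C : LocalSimpData A AP V) (owner : AP → A) : Prop :=
  (∀ X ∈ C.S, X.Nonempty) ∧
  (∀ v : V, ({v} : Finset V) ∈ C.S) ∧
  (∀ X ∈ C.S, ∀ Y : Finset V, Y ⊆ X → Y.Nonempty → Y ∈ C.S) ∧
  (∀ X ∈ C.S, ∀ v ∈ X, ∀ w ∈ X, C.chi v = C.chi w → v = w) ∧
  (∀ X, C.IsFacet X → X ∈ C.Wld) ∧ C.Wld ⊆ C.S ∧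
  (∀ v : V, ∀ p ∈ C.vlabel v, owner p = C.chi v)

/-- The labelling of a world: the union of the labellings of its vertices. -/
def wlabel (C : LocalSimpData A AP V) (X : Finset V) : Set AP :=
  ⋃ v ∈ X, C.vlabel v

end LocalSimpData

/-- Purely propositional formulas. -/
inductive PForm (AP : Type) : Type
  | atom : AP → PForm AP
  | neg : PForm AP → PForm AP
  | and : PForm AP → PForm AP → PForm AP

/-- The atomic propositions occurring in a propositional formula. -/
def PForm.atoms {AP : Type} : PForm AP → Set AP
  | .atom p => {p}
  | .neg ψ => ψ.atoms
  | .and ψ χ => ψ.atoms ∪ χ.atoms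

/-- Satisfaction of propositional formulas at a world of a local simplicial model. -/
def PForm.psat {A AP V : Type} (C : LocalSimpData A AP V) (w : Finset V) : PForm AP → Prop
  | .atom p => p ∈ C.wlabel w
  | .neg ψ => ¬ PForm.psat C w ψ
  | .and ψ χ => PForm.psat C w ψ ∧ PForm.psat C w χ

/-- The guarded positive epistemic fragment:
`φ ::= (alive_B ⇒ ψ_B) | φ∧φ | φ∨φ | D_U φ | C_U φ`. -/
inductive GForm (A AP : Type) : Type
  | guard : Finset A → PForm AP → GForm A AP
  | and : GForm A AP → GForm A AP → GForm A AP
  | or : GForm A AP → GForm A AP → GForm A AP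
  | dk : Finset A → GForm A AP → GForm A AP
  | ck : Finset A → GForm A AP → GForm A AP

/-- Well-formedness of guarded formulas: in a guard `alive_B ⇒ ψ_B`, all atomic
propositions of `ψ_B` belong to agents of `B`. -/
def GForm.WF {A AP : Type} (owner : AP → A) : GForm A AP → Prop
  | .guard B ψ => ∀ p ∈ ψ.atoms, owner p ∈ B
  | .and φ₁ φ₂ => φ₁.WF owner ∧ φ₂.WF owner
  | .or φ₁ φ₂ => φ₁.WF owner ∧ φ₂.WF owner
  | .dk _ φ => φ.WF owner
  | .ck _ φ => φ.WF owner

/-- Reachability through a sequence of worlds, consecutive ones sharing a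
`U`-coloured simplex. -/
def creach {A AP V : Type} (C : LocalSimpData A AP V) (U : Finset A) :
    Finset V → Finset V → Prop :=
  Relation.ReflTransGen
    (fun X Y => Y ∈ C.Wld ∧ (↑U : Set A) ⊆ C.chi '' ((↑X : Set V) ∩ ↑Y))

/-- Satisfaction of guarded positive formulas on local simplicial models. -/
def GForm.gsat {A AP V : Type} (C : LocalSimpData A AP V) :
    Finset V → GForm A AP → Prop
  | w, .guard B ψ => ((↑B : Set A) ⊆ C.chi '' (↑w : Set V)) → ψ.psat C w
  | w, .and φ₁ φ₂ => φ₁.gsat C w ∧ φ₂.gsat C w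
  | w, .or φ₁ φ₂ => φ₁.gsat C w ∨ φ₂.gsat C w
  | w, .dk U φ => ∀ w' ∈ C.Wld, (↑U : Set A) ⊆ C.chi '' ((↑w : Set V) ∩ ↑w') → φ.gsat C w'
  | w, .ck U φ => ∀ w' ∈ C.Wld, creach C U w w' → φ.gsat C w'

/-- Image of a simplex under a vertex map. -/
def fimage {V V' : Type} (f : V → V') (X : Finset V) : Finset V' :=
  X.image f

/-- Morphisms of local simplicial models: map simplexes to simplexes and worlds to
worlds, preserving colours and vertex labellings. -/
def IsMorphism {A AP V V' : Type} (C : LocalSimpData A AP V) (D : LocalSimpData A AP V')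
    (f : V → V') : Prop :=
  (∀ X ∈ C.S, fimage f X ∈ D.S) ∧
  (∀ X ∈ C.Wld, fimage f X ∈ D.Wld) ∧
  (∀ v : V, D.chi (f v) = C.chi v) ∧
  (∀ v : V, D.vlabel (f v) = C.vlabel v)

end

/-! Every axiom of `SC` is valid and every rule preserves validity, because the
`B`-indistinguishability relation `B ⊆ χ(w ∩ w')` of a simplicial model is symmetric,
antitone in `B`, and transitive on worlds whose vertices have distinct colours. The one
axiom that uses the geometry is `P`: if all agents outside `B` are dead in `w` and `w'`,
then every vertex of either world has a colour in `B`, so `B`-indistinguishability forces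
`w = w'`. -/

namespace SimpData

variable {A AP V : Type} (C : SimpData A AP V)

def Indist (B : Finset A) (w w' : Finset V) : Prop :=
  (↑B : Set A) ⊆ C.chi '' ((↑w : Set V) ∩ ↑w')

variable {C}

theorem IsModel.injOn_chi_of_mem_wld {w : Finset V} (hC : C.IsModel) (hw : w ∈ C.Wld) :
    Set.InjOn C.chi ↑w :=
  fun _ hu _ hv huv => hC.1.2.2.2 w (hC.2.2 hw) _ hu _ hv huv

theorem IsModel.nonempty_of_mem_wld {w : Finset V} (hC : C.IsModel) (hw : w ∈ C.Wld) :
    w.Nonempty :=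
  hC.1.1 w (hC.2.2 hw)

namespace Indist

variable {B B' : Finset A} {w w' w'' : Finset V}

theorem symm (h : C.Indist B w w') : C.Indist B w' w := by
  rwa [Indist, Set.inter_comm]

theorem mono (hBB' : B ⊆ B') (h : C.Indist B' w w') : C.Indist B w w' :=
  (Finset.coe_subset.mpr hBB').trans h

theorem trans (hinj : Set.InjOn C.chi ↑w') (h₁ : C.Indist B w w') (h₂ : C.Indist B w' w'') :
    C.Indist B w w'' := by
  intro a ha
  obtain ⟨u, ⟨huw, huw'⟩, rfl⟩ := h₁ ha
  obtain ⟨v, ⟨hvw', hvw''⟩, hvu⟩ := h₂ ha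
  obtain rfl : v = u := hinj hvw' huw' hvu
  exact ⟨v, ⟨huw, hvw''⟩, rfl⟩

theorem self_iff : C.Indist B w w ↔ (↑B : Set A) ⊆ C.chi '' ↑w := by
  rw [Indist, Set.inter_self]

theorem subset_of_chi_image_subset (hinj : Set.InjOn C.chi ↑w)
    (hw : C.chi '' ↑w ⊆ ↑B) (h : C.Indist B w w') : w ⊆ w' := by
  intro u hu
  obtain ⟨v, ⟨hvw, hvw'⟩, hvu⟩ := h (hw ⟨u, hu, rfl⟩)
  rwa [← hinj hvw hu hvu]

end Indist

variable {w : Finset V}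

theorem sat_dk {B : Finset A} (hB : B.Nonempty) (φ : Form A AP) :
    C.sat w (.dk B hB φ) ↔ ∀ w' ∈ C.Wld, C.Indist B w w' → C.sat w' φ :=
  Iff.rfl

theorem sat_imp (φ ψ : Form A AP) : C.sat w (φ.imp ψ) ↔ (C.sat w φ → C.sat w ψ) := by
  simp only [Form.imp, Form.or, sat]
  tauto

theorem sat_or (φ ψ : Form A AP) : C.sat w (φ.or ψ) ↔ (C.sat w φ ∨ C.sat w ψ) := by
  simp only [Form.or, sat]
  tauto

theorem sat_axK {B : Finset A} (hB : B.Nonempty) (φ ψ : Form A AP) :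
    C.sat w ((Form.dk B hB (φ.imp ψ)).imp ((Form.dk B hB φ).imp (Form.dk B hB ψ))) := by
  simp only [sat_imp, sat_dk]
  exact fun himp hφ w' hw' hww' => himp w' hw' hww' (hφ w' hw' hww')

theorem sat_axB (hw : w ∈ C.Wld) {B : Finset A} (hB : B.Nonempty) (φ : Form A AP) :
    C.sat w (φ.imp (Form.dk B hB (Form.neg (Form.dk B hB φ.neg)))) :=
  (sat_imp _ _).mpr fun hφ _ _ hww' hnot => hnot w hw (Indist.symm hww') hφ

theorem sat_ax4 (hinj : ∀ w ∈ C.Wld, Set.InjOn C.chi ↑w) {B : Finset A} (hB : B.Nonempty)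
    (φ : Form A AP) : C.sat w ((Form.dk B hB φ).imp (Form.dk B hB (Form.dk B hB φ))) :=
  (sat_imp _ _).mpr fun hφ w' hw' hww' w'' hw'' hw'w'' =>
    hφ w'' hw'' (Indist.trans (hinj w' hw') hww' hw'w'')

theorem sat_axMono {B B' : Finset A} (hB : B.Nonempty) (hB' : B'.Nonempty) (hBB' : B ⊆ B')
    (φ : Form A AP) : C.sat w ((Form.dk B hB φ).imp (Form.dk B' hB' φ)) :=
  (sat_imp _ _).mpr fun hφ w' hw' hww' => hφ w' hw' (Indist.mono hBB' hww')

variable [Nonempty AP]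

theorem sat_verum : C.sat w (Form.verum : Form A AP) :=
  (sat_or _ _).mpr (em _)

theorem not_sat_falsum : ¬ C.sat w (Form.falsum : Form A AP) :=
  not_not_intro sat_verum

theorem sat_bigAnd (L : List (Form A AP)) : C.sat w (Form.bigAnd L) ↔ ∀ φ ∈ L, C.sat w φ := by
  induction L with
  | nil => simpa [Form.bigAnd] using sat_verum
  | cons φ L ih => simp [Form.bigAnd, sat, ih]

theorem sat_bigOr (L : List (Form A AP)) : C.sat w (Form.bigOr L) ↔ ∃ φ ∈ L, C.sat w φ := by
  induction L with
  | nil => simpa [Form.bigOr] using not_sat_falsum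
  | cons φ L ih => simp [Form.bigOr, sat_or, ih]

theorem sat_aliveGrp (hw : w ∈ C.Wld) {B : Finset A} (hB : B.Nonempty) :
    C.sat w (Form.aliveGrp B hB : Form A AP) ↔ (↑B : Set A) ⊆ C.chi '' ↑w := by
  refine ⟨fun h => ?_, fun h hdead => not_sat_falsum (hdead w hw (Indist.self_iff.mpr h))⟩
  simp only [Form.aliveGrp, sat, not_forall] at h
  obtain ⟨w', -, hww', -⟩ := h
  exact hww'.trans (Set.image_mono Set.inter_subset_left)

theorem sat_deadAgent (hw : w ∈ C.Wld) (a : A) :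
    C.sat w (Form.deadAgent a : Form A AP) ↔ a ∉ C.chi '' ↑w := by
  have h := sat_aliveGrp (C := C) hw (Finset.singleton_nonempty a)
  rw [Finset.coe_singleton, Set.singleton_subset_iff] at h
  exact not_not.symm.trans (not_congr h)

theorem sat_deadGrp (hw : w ∈ C.Wld) (D : Finset A) :
    C.sat w (Form.deadGrp D : Form A AP) ↔ ∀ a ∈ D, a ∉ C.chi '' ↑w := by
  simp [Form.deadGrp, sat_bigAnd, sat_deadAgent hw]

theorem sat_axUnion (hw : w ∈ C.Wld) {B B' : Finset A} (hB : B.Nonempty) (hB' : B'.Nonempty) :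
    C.sat w (((Form.aliveGrp B hB).and (Form.aliveGrp B' hB')).imp
      (Form.aliveGrp (B ∪ B') (unionNE hB)) : Form A AP) := by
  rw [sat_imp, sat, sat_aliveGrp hw, sat_aliveGrp hw, sat_aliveGrp hw, Finset.coe_union]
  exact fun h => Set.union_subset h.1 h.2

theorem sat_axNE [Fintype A] (hw : w ∈ C.Wld) (hne : w.Nonempty) :
    C.sat w (Form.bigOr ((Finset.univ : Finset A).toList.map Form.aliveAgent) : Form A AP) := by
  obtain ⟨v, hv⟩ := hne
  refine (sat_bigOr _).mpr ⟨Form.aliveAgent (C.chi v), by simp, ?_⟩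
  simpa [Form.aliveAgent, sat, sat_deadAgent hw] using ⟨v, hv, rfl⟩

theorem sat_axP [Fintype A] (hinj : ∀ w ∈ C.Wld, Set.InjOn C.chi ↑w) (hw : w ∈ C.Wld)
    {B : Finset A} (hB : B.Nonempty) (φ : Form A AP) :
    C.sat w ((((Form.aliveGrp B hB).and (Form.deadGrp Bᶜ)).and φ).imp
      (Form.dk B hB ((Form.deadGrp Bᶜ).imp φ))) := by
  have chi_image_subset : ∀ {x}, x ∈ C.Wld → C.sat x (Form.deadGrp Bᶜ : Form A AP) →
      C.chi '' ↑x ⊆ ↑B := by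
    intro x hx hdead a ha
    by_contra haB
    exact (sat_deadGrp hx _).mp hdead a (by simpa using haB) ha
  rw [sat_imp]
  rintro ⟨⟨-, hdead⟩, hφ⟩ w' hw' hww'
  refine (sat_imp _ _).mpr fun hdead' => ?_
  have hsub := Indist.subset_of_chi_image_subset (hinj w hw) (chi_image_subset hw hdead) hww'
  have hsub' := Indist.subset_of_chi_image_subset (hinj w' hw') (chi_image_subset hw' hdead')
    (Indist.symm hww')
  rwa [← hsub.antisymm hsub']

end SimpData

open SimpData in
/-- Soundness of `SC` for simplicial models: if a formula `φ` of `L_D` is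
provable in the proof system `SC`, then for every (generalized) simplicial model `C`
and every world `w` of `C`, we have `C,w ⊨ φ`. -/
theorem soundness_SC (A AP : Type) [Fintype A] [Nonempty AP]
    (φ : Form A AP) (hφ : SC φ) :
    ∀ (V : Type) (C : SimpData A AP V), C.IsModel → ∀ w ∈ C.Wld, C.sat w φ := by
  intro V C hC
  have hinj : ∀ w ∈ C.Wld, Set.InjOn C.chi ↑w := fun _ => hC.injOn_chi_of_mem_wld
  induction hφ with
  | taut ht => exact fun w _ => ht (C.sat w) (fun _ => Iff.rfl) (fun _ _ => Iff.rfl)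
  | mp _ _ ihImp ih => exact fun w hw => (sat_imp _ _).mp (ihImp w hw) (ih w hw)
  | nec B hB _ ih => exact fun _ _ w' hw' _ => ih w' hw'
  | axK B hB => exact fun _ _ => sat_axK hB _ _
  | axB B hB => exact fun _ hw => sat_axB hw hB _
  | ax4 B hB => exact fun _ _ => sat_ax4 hinj hB _
  | axMono B B' hB hB' hBB' => exact fun _ _ => sat_axMono hB hB' hBB' _
  | axUnion B B' hB hB' => exact fun _ hw => sat_axUnion hw hB hB'
  | axNE => exact fun _ hw => sat_axNE hw (hC.nonempty_of_mem_wld hw)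
  | axP B hB => exact fun _ hw => sat_axP hinj hw hB _
  | extra h => exact h.elim
end

section
/- For every (generalized) simplicial model C, the associated structure κ(C) is a partial epistemic frame (each relation ∼_a is symmetric and transitive) which is proper and has no empty world. -/
attribute [local instance] Classical.propDecidable

/-- For every (generalized) simplicial model `C`, the associated structure
`κ(C)` is a partial epistemic frame (each `∼_a` is symmetric and transitive) which is
proper and has no empty world. -/
theorem kappa_is_proper_PE (A AP V : Type) (C : SimpData A AP V) (hC : C.IsModel) :
    (kappa C).IsPE ∧ (kappa C).Proper ∧ (kappa C).NoEmptyWorld := by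
  obtain ⟨⟨hne, hsing, hdown, hcol⟩, hfac, hWS⟩ := hC
  refine ⟨?_, ?_, ?_⟩
  · intro a
    constructor
    · rintro w w' ⟨v, hv, rfl⟩
      exact ⟨v, ⟨hv.2, hv.1⟩, rfl⟩
    · rintro w w' w'' ⟨v, hv, rfl⟩ ⟨u, hu, hchi⟩
      have hvw' : v ∈ w'.1 := by exact_mod_cast hv.2
      have huw' : u ∈ w'.1 := by exact_mod_cast hu.1
      have : u = v := hcol w'.1 (hWS w'.2) u huw' v hvw' hchi
      subst this
      exact ⟨u, ⟨hv.1, hu.2⟩, rfl⟩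
  · intro w w' hne' hlive
    by_contra h
    push_neg at h
    have key : ∀ x y : {w : Finset V // w ∈ C.Wld},
        (∀ a ∈ (kappa C).live x, (kappa C).rel a x y) → x.1 ⊆ y.1 := by
      intro x y hxy v hv
      have hva : (kappa C).rel (C.chi v) x x := by
        exact ⟨v, ⟨by exact_mod_cast hv, by exact_mod_cast hv⟩, rfl⟩
      obtain ⟨u, hu, hchi⟩ := hxy _ hva
      have hux : u ∈ x.1 := by exact_mod_cast hu.1
      have : u = v := hcol x.1 (hWS x.2) u hux v hv hchi
      subst this
      exact_mod_cast hu.2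
    have h1 : w.1 ⊆ w'.1 := key w w' h
    have h2 : w'.1 ⊆ w.1 := by
      apply key
      intro a ha
      rw [← hlive] at ha
      exact (fun ⟨v, hv, e⟩ => ⟨v, ⟨hv.2, hv.1⟩, e⟩ : (kappa C).rel a w w' → _) (h a ha)
    exact hne' (Subtype.ext (le_antisymm h1 h2))
  · intro w
    obtain ⟨v, hv⟩ := hne w.1 (hWS w.2)
    exact ⟨C.chi v, v, ⟨by exact_mod_cast hv, by exact_mod_cast hv⟩, rfl⟩
end

section
/- If a (generalized) simplicial model C is minimal (i.e., its set of worlds is exactly the set of facets), then the associated partial epistemic model κ(C) is minimal; if C is maximal (i.e., its set of worlds is the set of all simplexes), then κ(C) is maximal. -/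
attribute [local instance] Classical.propDecidable

/-- If a simplicial model `C` is minimal then `κ(C)` is minimal; if `C` is
maximal then `κ(C)` is maximal. -/
theorem kappa_min_max (A AP V : Type) (C : SimpData A AP V) (hC : C.IsModel) :
    (C.Minimal → (kappa C).Minimal) ∧ (C.Maximal → (kappa C).Maximal) := by
  obtain ⟨⟨hne, hsing, hdown, hchi⟩, hfac, hWS⟩ := hC
  have hlive : ∀ w : {w : Finset V // w ∈ C.Wld},
      (kappa C).live w = C.chi '' (↑w.1 : Set V) := by
    intro w
    simp [PEData.live, kappa, Set.inter_self]
    rfl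
  constructor
  · intro hmin w w' hsub
    rw [hlive, hlive] at hsub
    by_contra hcon
    push_neg at hcon
    simp only [hlive] at hcon
    -- show w.1 ⊆ w'.1
    have hsubv : w.1 ⊆ w'.1 := by
      intro v hv
      have ha : (kappa C).rel (C.chi v) w w' := hcon _ ⟨v, hv, rfl⟩
      obtain ⟨u, hu, hcu⟩ := ha
      have huw : u ∈ w.1 := hu.1
      have : u = v := hchi w.1 (hWS w.2) u huw v hv hcu
      exact this ▸ hu.2
    have hw' : w.1 = w'.1 := ((hmin w.1).mp w.2).2 w'.1 (hWS w'.2) hsubv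
    rw [hw'] at hsub
    exact hsub.2 hsub.1
  · intro hmax w' B hBne hBsub
    rw [hlive] at hBsub
    set X : Finset V := w'.1.filter (fun v => C.chi v ∈ B) with hX
    have hXsub : X ⊆ w'.1 := Finset.filter_subset _ _
    have hXne : X.Nonempty := by
      obtain ⟨a, ha⟩ := hBne
      obtain ⟨v, hv, hcv⟩ := hBsub.1 ha
      exact ⟨v, Finset.mem_filter.mpr ⟨hv, hcv ▸ ha⟩⟩
    have hXS : X ∈ C.S := hdown w'.1 (hWS w'.2) X hXsub hXne
    have hXW : X ∈ C.Wld := hmax ▸ hXS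
    refine ⟨⟨X, hXW⟩, ?_, ?_⟩
    · rw [hlive]
      ext a
      constructor
      · rintro ⟨v, hv, rfl⟩
        exact (Finset.mem_filter.mp (Finset.mem_coe.mp hv)).2
      · intro ha
        obtain ⟨v, hv, hcv⟩ := hBsub.1 ha
        exact ⟨v, Finset.mem_coe.mpr (Finset.mem_filter.mpr ⟨Finset.mem_coe.mp hv, hcv ▸ ha⟩), hcv⟩
    · intro a ha
      obtain ⟨v, hv, hcv⟩ := hBsub.1 ha
      have hvX : v ∈ X := Finset.mem_filter.mpr ⟨hv, hcv ▸ ha⟩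
      exact ⟨v, ⟨hvX, hXsub hvX⟩, hcv⟩
end

section
/- For every proper partial epistemic model M with no empty world, the associated structure σ(M) is a well-defined (generalized) simplicial model; in particular its set of worlds contains all facets, the map w ↦ X_w is a bijection between the worlds of M and the worlds of σ(M), so the labelling ℓ(X_w) = L(w) is well defined. Moreover, if M is minimal then σ(M) is minimal, and if M is maximal then σ(M) is maximal. -/
attribute [local instance] Classical.propDecidable

/-!
The vertex of colour `a` in `X_w` records the class `[w]_a`, so `X_w ⊆ X_u` forces
`live w ⊆ live u` and `w ∼_a u` for every `a ∈ live w`. Properness then makes `w ↦ X_w`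
injective, and together with minimality it makes every `X_w` a facet. Conversely two
vertices of the same colour `a` in `X_w` and `X_u` coincide as soon as `w ∼_a u`; hence,
under maximality, a face of `X_u` with colours `B` is the world `X_w` of any `w` with
`live w = B` and `w ∼_a u` for all `a ∈ B`.
-/

namespace PEData

variable {A AP W : Type} {M : PEData A AP W}

theorem setOf_rel_eq_of_rel (hM : M.IsPE) {a : A} {w u : W} (h : M.rel a w u) :
    {x | M.rel a w x} = {x | M.rel a u x} :=
  Set.ext fun _ => ⟨(hM a).2 ((hM a).1 h), (hM a).2 h⟩

theorem Proper.eq_of_live_eq (hp : M.Proper) {w u : W} (hlive : M.live w = M.live u)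
    (hrel : ∀ a ∈ M.live w, M.rel a w u) : w = u := by
  by_contra hne
  obtain ⟨a, ha, hna⟩ := hp w u hne hlive
  exact hna (hrel a ha)

theorem Minimal.live_eq (hmin : M.Minimal) {w u : W} (hsub : M.live w ⊆ M.live u)
    (hrel : ∀ a ∈ M.live w, M.rel a w u) : M.live w = M.live u := by
  by_contra hne
  obtain ⟨a, ha, hna⟩ := hmin w u (hsub.ssubset_of_ne hne)
  exact hna (hrel a ha)

theorem Maximal.exists_live_eq (hmax : M.Maximal) {u : W} {B : Set A} (hB : B.Nonempty)
    (hBu : B ⊆ M.live u) : ∃ w, M.live w = B ∧ ∀ a ∈ B, M.rel a w u := by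
  rcases Set.eq_or_ssubset_of_subset hBu with rfl | hlt
  · exact ⟨u, rfl, fun _ ha => ha⟩
  · exact hmax u B hB hlt

end PEData

section Sigma

variable {A AP W : Type} [Fintype A] {M : PEData A AP W}

theorem mem_sigmaWorld {v : sigmaVert M} {w : W} :
    v ∈ sigmaWorld M w ↔ M.rel v.1.1 w w ∧ v.1.2 = {x | M.rel v.1.1 w x} := by
  constructor
  · intro hv
    obtain ⟨⟨a, ha⟩, -, rfl⟩ := Finset.mem_image.mp hv
    exact ⟨(Finset.mem_filter.mp ha).2, rfl⟩
  · rintro ⟨hw, hclass⟩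
    exact Finset.mem_image.mpr ⟨⟨v.1.1, Finset.mem_filter.mpr ⟨Finset.mem_univ _, hw⟩⟩,
      Finset.mem_attach _ _, Subtype.ext (Prod.ext rfl hclass.symm)⟩

/-- The vertex `v^w_a`. -/
def sigmaVertex (M : PEData A AP W) {a : A} {w : W} (ha : a ∈ M.live w) : sigmaVert M :=
  ⟨(a, {x | M.rel a w x}), w, ha, rfl⟩

theorem sigmaVertex_mem_sigmaWorld {a : A} {w : W} (ha : a ∈ M.live w) :
    sigmaVertex M ha ∈ sigmaWorld M w :=
  mem_sigmaWorld.mpr ⟨ha, rfl⟩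

theorem sigmaVert_eq_of_mem_sigmaWorld {w u : W} {v v' : sigmaVert M}
    (hv : v ∈ sigmaWorld M w) (hv' : v' ∈ sigmaWorld M u) (hc : v.1.1 = v'.1.1)
    (hclass : {x | M.rel v.1.1 w x} = {x | M.rel v.1.1 u x}) : v = v' :=
  Subtype.ext <| Prod.ext hc <| by
    rw [(mem_sigmaWorld.mp hv).2, hclass, (mem_sigmaWorld.mp hv').2, hc]

theorem mem_live_and_rel_of_sigmaWorld_subset {w u : W}
    (h : sigmaWorld M w ⊆ sigmaWorld M u) {a : A} (ha : a ∈ M.live w) :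
    a ∈ M.live u ∧ M.rel a w u := by
  obtain ⟨hu, hclass⟩ := mem_sigmaWorld.mp (h (sigmaVertex_mem_sigmaWorld ha))
  change {x | M.rel a w x} = {x | M.rel a u x} at hclass
  exact ⟨hu, (Set.ext_iff.mp hclass u).mpr hu⟩

theorem sigmaWorld_injective (hp : M.Proper) : Function.Injective (sigmaWorld M) :=
  fun _ _ h => hp.eq_of_live_eq
    (subset_antisymm (fun _ ha => (mem_live_and_rel_of_sigmaWorld_subset h.le ha).1)
      (fun _ ha => (mem_live_and_rel_of_sigmaWorld_subset h.ge ha).1))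
    (fun _ ha => (mem_live_and_rel_of_sigmaWorld_subset h.le ha).2)

theorem eq_of_sigmaWorld_subset (hp : M.Proper) (hmin : M.Minimal) {w u : W}
    (h : sigmaWorld M w ⊆ sigmaWorld M u) : w = u :=
  have hrel : ∀ a ∈ M.live w, M.rel a w u := fun _ ha =>
    (mem_live_and_rel_of_sigmaWorld_subset h ha).2
  hp.eq_of_live_eq
    (hmin.live_eq (fun _ ha => (mem_live_and_rel_of_sigmaWorld_subset h ha).1) hrel) hrel

theorem sigmaWorld_mem_S (hne : M.NoEmptyWorld) (w : W) : sigmaWorld M w ∈ (sigmaModel M).S :=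
  have ⟨_, ha⟩ := hne w
  ⟨⟨_, sigmaVertex_mem_sigmaWorld ha⟩, w, subset_rfl⟩

theorem sigmaModel_isComplex : (sigmaModel M).IsComplex := by
  refine ⟨fun X hX => hX.1, ?_, ?_, ?_⟩
  · rintro ⟨⟨a, s⟩, w, ha, hs⟩
    exact ⟨Finset.singleton_nonempty _, w, Finset.singleton_subset_iff.mpr
      (mem_sigmaWorld.mpr ⟨ha, hs⟩)⟩
  · rintro X ⟨-, u, hXu⟩ Y hYX hY
    exact ⟨hY, u, hYX.trans hXu⟩
  · rintro X ⟨-, u, hXu⟩ v hv v' hv' hc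
    exact sigmaVert_eq_of_mem_sigmaWorld (hXu hv) (hXu hv') hc rfl

theorem sigmaModel_mem_Wld_of_isFacet (hne : M.NoEmptyWorld) {X : Finset (sigmaVert M)}
    (hX : (sigmaModel M).IsFacet X) : X ∈ (sigmaModel M).Wld :=
  have ⟨⟨_, u, hXu⟩, hmax⟩ := hX
  ⟨u, hmax _ (sigmaWorld_mem_S hne u) hXu⟩

theorem sigmaModel_Wld_subset_S (hne : M.NoEmptyWorld) :
    (sigmaModel M).Wld ⊆ (sigmaModel M).S := by
  rintro _ ⟨w, rfl⟩
  exact sigmaWorld_mem_S hne w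

theorem sigmaModel_isModel (hne : M.NoEmptyWorld) : (sigmaModel M).IsModel :=
  ⟨sigmaModel_isComplex, fun _ => sigmaModel_mem_Wld_of_isFacet hne,
    sigmaModel_Wld_subset_S hne⟩

theorem sigmaModel_Wld_eq_range : (sigmaModel M).Wld = Set.range (sigmaWorld M) :=
  Set.ext fun _ => exists_congr fun _ => eq_comm

theorem sigmaModel_label_sigmaWorld (hp : M.Proper) (w : W) :
    (sigmaModel M).label (sigmaWorld M w) = M.label w := by
  ext p
  constructor
  · rintro ⟨u, hwu, hpu⟩
    rwa [sigmaWorld_injective hp hwu]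
  · exact fun hpw => ⟨w, rfl, hpw⟩

theorem sigmaModel_minimal (hp : M.Proper) (hne : M.NoEmptyWorld) (hmin : M.Minimal) :
    (sigmaModel M).Minimal := by
  refine fun X => ⟨?_, sigmaModel_mem_Wld_of_isFacet hne⟩
  rintro ⟨w, rfl⟩
  refine ⟨sigmaWorld_mem_S hne w, ?_⟩
  rintro Y ⟨-, u, hYu⟩ hwY
  obtain rfl := eq_of_sigmaWorld_subset hp hmin (hwY.trans hYu)
  exact subset_antisymm hwY hYu

theorem sigmaModel_mem_Wld_of_mem_S (hM : M.IsPE) (hmax : M.Maximal)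
    {X : Finset (sigmaVert M)} (hX : X ∈ (sigmaModel M).S) : X ∈ (sigmaModel M).Wld := by
  obtain ⟨⟨v₀, hv₀⟩, u, hXu⟩ := hX
  obtain ⟨w, hlive, hrel⟩ := hmax.exists_live_eq (B := (fun v : sigmaVert M => v.1.1) '' ↑X)
    ⟨_, v₀, hv₀, rfl⟩ (by rintro _ ⟨v, hv, rfl⟩; exact (mem_sigmaWorld.mp (hXu hv)).1)
  have hclass {a} (ha : a ∈ M.live w) : {x | M.rel a w x} = {x | M.rel a u x} :=
    M.setOf_rel_eq_of_rel hM (hrel a (hlive ▸ ha))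
  refine ⟨w, subset_antisymm (fun v hv => ?_) (fun v hv => ?_)⟩
  · have ha : v.1.1 ∈ M.live w := hlive ▸ ⟨v, hv, rfl⟩
    rw [sigmaVert_eq_of_mem_sigmaWorld (hXu hv) (sigmaVertex_mem_sigmaWorld ha) rfl
      (hclass ha).symm]
    exact sigmaVertex_mem_sigmaWorld ha
  · have ha : v.1.1 ∈ M.live w := (mem_sigmaWorld.mp hv).1
    obtain ⟨v', hv', hc⟩ : v.1.1 ∈ (fun v : sigmaVert M => v.1.1) '' ↑X := hlive ▸ ha
    rwa [sigmaVert_eq_of_mem_sigmaWorld hv (hXu hv') hc.symm (hclass ha)]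

theorem sigmaModel_maximal (hM : M.IsPE) (hne : M.NoEmptyWorld) (hmax : M.Maximal) :
    (sigmaModel M).Maximal :=
  subset_antisymm (sigmaModel_Wld_subset_S hne) fun _ => sigmaModel_mem_Wld_of_mem_S hM hmax

end Sigma

/-- For every proper partial epistemic model `M` with no empty world,
`σ(M)` is a well-defined generalized simplicial model; the map `w ↦ X_w` is a bijection
between the worlds of `M` and the worlds of `σ(M)` (so the labelling `ℓ(X_w) = L(w)` is
well defined); moreover minimality and maximality are preserved. -/
theorem sigma_well_defined (A AP W : Type) [Fintype A] (M : PEData A AP W)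
    (h1 : M.IsPE) (h2 : M.Proper) (h3 : M.NoEmptyWorld) :
    (sigmaModel M).IsModel ∧
    Function.Injective (sigmaWorld M) ∧
    (sigmaModel M).Wld = Set.range (sigmaWorld M) ∧
    (∀ w : W, (sigmaModel M).label (sigmaWorld M w) = M.label w) ∧
    (M.Minimal → (sigmaModel M).Minimal) ∧
    (M.Maximal → (sigmaModel M).Maximal) :=
  ⟨sigmaModel_isModel h3, sigmaWorld_injective h2, sigmaModel_Wld_eq_range,
    sigmaModel_label_sigmaWorld h2, sigmaModel_minimal h2 h3, sigmaModel_maximal h1 h3⟩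
end
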